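/- For every real number x > 2, Σ_{m=0}^∞ catalan(m) · x^{−(2m+1)} = (x − √(x²−4))/2. -/

import Mathlib

/-!
With `z = x⁻²` the series is `x⁻¹ G(z)`, where `G(z) = Σ Cₘ zᵐ` is the Catalan generating function.
The Catalan recurrence is a Cauchy product, so `G = 1 + z G²` and `(1 - 2zG)² = 1 - 4z`. The sign
of `1 - 2zG` is settled by `G ≤ 2`, which holds up to the radius `z = 1/4` because
`Cₘ / 4ᵐ = 2 (bₘ / 4ᵐ - bₘ₊₁ / 4ᵐ⁺¹)` telescopes, `bₘ` being the central binomial coefficient.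
-/

open Finset

theorem catalan_div_four_pow_eq (m : ℕ) :
    (catalan m : ℝ) / 4 ^ m =
      2 * ((m.centralBinom : ℝ) / 4 ^ m - ((m + 1).centralBinom : ℝ) / 4 ^ (m + 1)) := by
  have hcat : ((m : ℝ) + 1) * catalan m = m.centralBinom := by
    exact_mod_cast succ_mul_catalan_eq_centralBinom m
  have hsucc : ((m : ℝ) + 1) * (m + 1).centralBinom = 2 * (2 * m + 1) * m.centralBinom := by
    exact_mod_cast Nat.succ_mul_centralBinom_succ m
  have hm : (m : ℝ) + 1 ≠ 0 := by positivity
  rw [pow_succ]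
  field_simp
  apply mul_left_cancel₀ hm
  linear_combination 4 * hcat + 2 * hsucc

theorem sum_range_catalan_div_four_pow_le (n : ℕ) :
    ∑ m ∈ range n, (catalan m : ℝ) / 4 ^ m ≤ 2 := by
  simp only [catalan_div_four_pow_eq, ← mul_sum]
  rw [sum_range_sub' (fun m => (m.centralBinom : ℝ) / 4 ^ m)]
  have : 0 ≤ (n.centralBinom : ℝ) / 4 ^ n := by positivity
  simp only [Nat.centralBinom_zero, Nat.cast_one, pow_zero, div_one]
  linarith

section

variable {z : ℝ}

theorem sum_range_catalan_mul_pow_le (hz₀ : 0 ≤ z) (hz : z ≤ 1 / 4) (n : ℕ) :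
    ∑ m ∈ range n, (catalan m : ℝ) * z ^ m ≤ 2 := by
  refine le_trans (sum_le_sum fun m _ => ?_) (sum_range_catalan_div_four_pow_le n)
  rw [div_eq_mul_inv, ← inv_pow]
  gcongr
  linarith

theorem summable_catalan_mul_pow (hz₀ : 0 ≤ z) (hz : z ≤ 1 / 4) :
    Summable fun m => (catalan m : ℝ) * z ^ m :=
  summable_of_sum_range_le (fun _ => by positivity) (sum_range_catalan_mul_pow_le hz₀ hz)

theorem tsum_catalan_mul_pow_le (hz₀ : 0 ≤ z) (hz : z ≤ 1 / 4) :
    ∑' m, (catalan m : ℝ) * z ^ m ≤ 2 :=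
  (summable_catalan_mul_pow hz₀ hz).tsum_le_of_sum_range_le (sum_range_catalan_mul_pow_le hz₀ hz)

theorem tsum_catalan_mul_pow_eq (hz₀ : 0 ≤ z) (hz : z ≤ 1 / 4) :
    ∑' m, (catalan m : ℝ) * z ^ m = 1 + z * (∑' m, (catalan m : ℝ) * z ^ m) ^ 2 := by
  have hs := summable_catalan_mul_pow hz₀ hz
  have hnorm : Summable fun m => ‖(catalan m : ℝ) * z ^ m‖ := hs.abs
  have hconv : ∀ n, ∑ ij ∈ antidiagonal n,
      (catalan ij.1 : ℝ) * z ^ ij.1 * ((catalan ij.2 : ℝ) * z ^ ij.2) =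
      (catalan (n + 1) : ℝ) * z ^ n := by
    intro n
    rw [catalan_succ', Nat.cast_sum, sum_mul]
    refine sum_congr rfl fun ij hij => ?_
    rw [HasAntidiagonal.mem_antidiagonal] at hij
    rw [← hij, pow_add]
    push_cast
    ring
  rw [sq, tsum_mul_tsum_eq_tsum_sum_antidiagonal_of_summable_norm hnorm hnorm,
    tsum_congr hconv, hs.tsum_eq_zero_add, ← tsum_mul_left]
  simp only [catalan_zero, Nat.cast_one, pow_zero, mul_one, pow_succ]
  congr 1
  exact tsum_congr fun n => by ring

theorem two_mul_mul_tsum_catalan_mul_pow (hz₀ : 0 ≤ z) (hz : z ≤ 1 / 4) :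
    2 * z * ∑' m, (catalan m : ℝ) * z ^ m = 1 - √(1 - 4 * z) := by
  set G := ∑' m, (catalan m : ℝ) * z ^ m
  have hG_eq := tsum_catalan_mul_pow_eq hz₀ hz
  have hG_le := tsum_catalan_mul_pow_le hz₀ hz
  have hsq : (1 - 2 * z * G) ^ 2 = 1 - 4 * z := by linear_combination (-4 * z) * hG_eq
  have hnonneg : 0 ≤ 1 - 2 * z * G := by nlinarith
  rw [← hsq, Real.sqrt_sq hnonneg]
  ring

end

/-- For every real `x > 2`, `Σ_{m≥0} catalan(m)·x^{-(2m+1)} = (x - √(x²-4))/2`. -/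
theorem catalan_series_eq_sqrt_formula (x : ℝ) (hx : 2 < x) :
    HasSum (fun m : ℕ => (catalan m : ℝ) * x ^ (-(2 * (m : ℤ) + 1)))
      ((x - Real.sqrt (x ^ 2 - 4)) / 2) := by
  have hx₀ : 0 < x := by linarith
  set t := x⁻¹
  have hxt : x * t = 1 := mul_inv_cancel₀ hx₀.ne'
  have hz₀ : 0 ≤ t ^ 2 := sq_nonneg t
  have hz : t ^ 2 ≤ 1 / 4 := by
    rw [inv_pow, one_div]
    exact inv_anti₀ (by norm_num) (by nlinarith)
  set G := ∑' m, (catalan m : ℝ) * (t ^ 2) ^ m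
  have hG : 2 * t ^ 2 * G = 1 - √(1 - 4 * t ^ 2) := two_mul_mul_tsum_catalan_mul_pow hz₀ hz
  have hterm (m : ℕ) : (catalan m : ℝ) * x ^ (-(2 * (m : ℤ) + 1)) =
      t * ((catalan m : ℝ) * (t ^ 2) ^ m) := by
    rw [zpow_neg, ← inv_zpow, show 2 * (m : ℤ) + 1 = ((2 * m + 1 : ℕ) : ℤ) by push_cast; ring,
      zpow_natCast]
    ring
  have hsqrt : √(x ^ 2 - 4) = x * √(1 - 4 * t ^ 2) :=
    calc √(x ^ 2 - 4) = √(x ^ 2 * (1 - 4 * t ^ 2)) := by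
          congr 1; linear_combination 4 * (x * t + 1) * hxt
      _ = x * √(1 - 4 * t ^ 2) := by rw [Real.sqrt_mul (sq_nonneg x), Real.sqrt_sq hx₀.le]
  have hvalue : (x - √(x ^ 2 - 4)) / 2 = t * G := by
    rw [hsqrt]
    linear_combination (-(x / 2)) * hG + t * G * hxt
  simp only [hterm, hvalue]
  exact (summable_catalan_mul_pow hz₀ hz).hasSum.mul_left t
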